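/- Fix N ≥ 2 and target price p* with p*_min ≤ p* ≤ a/(2(b-c)), where p*_min = a(N-1)/((N-1)(2b-c) + c). Define ρ* = (2b-c)(p* - p_NE)/(c·p*) with p_NE = a/(2b-c). Then ρ* ∈ [-1/(N-1), 1], and with U_i = p* for all i, V_ii = σ², V_ij = ρ*σ² (σ² > 0), the misspecified OLS price of every firm equals p*: ((a + c p*)σ² - c p* ρ* σ²) / (2(bσ² - cρ*σ²)) = p* (assuming b - cρ* > 0). -/

import Mathlib

/-!
The OLS price at a symmetric equicorrelated state is homogeneous of degree zero in the
variance, so it equals `(a + c(1-ρ)p) / (2(b - cρ))`, and this is a fixed point `p` exactly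
when `c p ρ = (2b - c) p - a`, which is how `ρ*` is defined. Multiplying through by `c p > 0`,
the bounds `ρ* ≤ 1` and `-1/(N-1) ≤ ρ*` become the bounds `p ≤ a/(2(b-c))` and
`p*_min ≤ p` on the target price.
-/

namespace Cooper

variable {a b c p ρ : ℝ}

lemma mul_corr_eq_of_eq_div (h2bc : 2 * b - c ≠ 0) (hcp : c * p ≠ 0)
    (hρ : ρ = (2 * b - c) * (p - a / (2 * b - c)) / (c * p)) :
    c * p * ρ = (2 * b - c) * p - a := by
  rw [hρ, mul_div_cancel₀ _ hcp, mul_sub, mul_div_cancel₀ _ h2bc]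

lemma corr_le_one_of_price_le (hcp : 0 < c * p) (hρ : c * p * ρ = (2 * b - c) * p - a)
    (hhi : p * (2 * (b - c)) ≤ a) : ρ ≤ 1 :=
  le_of_mul_le_mul_left (by linarith) hcp

lemma neg_inv_le_corr_of_le_price {n : ℝ} (hn : 0 < n) (hcp : 0 < c * p)
    (hρ : c * p * ρ = (2 * b - c) * p - a) (hlo : a * n ≤ p * (n * (2 * b - c) + c)) :
    -(1 / n) ≤ ρ := by
  rw [neg_le, le_div_iff₀ hn]
  refine le_of_mul_le_mul_left ?_ hcp
  linear_combination (-n) * hρ + hlo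

lemma ols_price_equicorrelated (v : ℝ) (hv : v ≠ 0) (u : ℝ) :
    ((a + c * u) * v - c * u * (ρ * v)) / (2 * (b * v - c * (ρ * v)))
      = (a + c * (1 - ρ) * u) / (2 * (b - c * ρ)) := by
  rw [← mul_div_mul_right (a + c * (1 - ρ) * u) _ hv]
  congr 1 <;> ring

lemma ols_price_eq_self (hbranch : b - c * ρ ≠ 0) (hρ : c * p * ρ = (2 * b - c) * p - a) :
    (a + c * (1 - ρ) * p) / (2 * (b - c * ρ)) = p := by
  rw [div_eq_iff (mul_ne_zero two_ne_zero hbranch)]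
  linear_combination hρ

end Cooper

open Cooper in
theorem cooper_multiplicity_steady_state_general
    (a b c : ℝ) (ha : 0 < a) (hc : 0 < c) (hbc : c < b)
    (N : ℕ) (hN : 2 ≤ N) (σ : ℝ) (hσ : 0 < σ) (p : ℝ)
    (hlo : a * ((N : ℝ) - 1) / (((N : ℝ) - 1) * (2 * b - c) + c) ≤ p)
    (hhi : p ≤ a / (2 * (b - c)))
    (ρ : ℝ) (hρdef : ρ = (2 * b - c) * (p - a / (2 * b - c)) / (c * p))
    (hbranch : 0 < b - c * ρ) :
    (-(1 / ((N : ℝ) - 1)) ≤ ρ ∧ ρ ≤ 1) ∧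
    ((a + c * p) * σ ^ 2 - c * p * (ρ * σ ^ 2)) / (2 * (b * σ ^ 2 - c * (ρ * σ ^ 2)))
      = p := by
  have hN1 : (0 : ℝ) < N - 1 := by
    have : (2 : ℝ) ≤ N := by exact_mod_cast hN
    linarith
  have h2bc : 0 < 2 * b - c := by linarith
  have hden : 0 < ((N : ℝ) - 1) * (2 * b - c) + c := by positivity
  have hp : 0 < p := (div_pos (mul_pos ha hN1) hden).trans_le hlo
  have hcp : 0 < c * p := mul_pos hc hp
  have hρ := mul_corr_eq_of_eq_div h2bc.ne' hcp.ne' hρdef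
  refine ⟨⟨neg_inv_le_corr_of_le_price hN1 hcp hρ ?_, corr_le_one_of_price_le hcp hρ ?_⟩, ?_⟩
  · rwa [div_le_iff₀ hden] at hlo
  · rwa [le_div_iff₀ (by linarith)] at hhi
  · rw [ols_price_equicorrelated _ (pow_pos hσ 2).ne']
    exact ols_price_eq_self hbranch.ne' hρ

/-- Cooper-style multiplicity: for any target price `p*` in
`[a(N-1)/((N-1)(2b-c)+c), a/(2(b-c))]`, the correlation
`ρ* = (2b-c)(p* - p_NE)/(c p*)` lies in `[-1/(N-1), 1]`, and the symmetric
equicorrelated state `(p*, σ², ρ*σ²)` makes every firm's misspecified OLS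
price equal to `p*`. -/
theorem cooper_multiplicity_steady_state
    (a b c : ℝ) (ha : 0 < a) (hb : 0 < b) (hc : 0 < c) (hbc : c < b)
    (N : ℕ) (hN : 2 ≤ N) (σ : ℝ) (hσ : 0 < σ) (p : ℝ)
    (hlo : a * ((N : ℝ) - 1) / (((N : ℝ) - 1) * (2 * b - c) + c) ≤ p)
    (hhi : p ≤ a / (2 * (b - c)))
    (ρ : ℝ) (hρdef : ρ = (2 * b - c) * (p - a / (2 * b - c)) / (c * p))
    (hbranch : 0 < b - c * ρ) :
    (-(1 / ((N : ℝ) - 1)) ≤ ρ ∧ ρ ≤ 1) ∧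
    ((a + c * p) * σ ^ 2 - c * p * (ρ * σ ^ 2)) / (2 * (b * σ ^ 2 - c * (ρ * σ ^ 2)))
      = p :=
  cooper_multiplicity_steady_state_general a b c ha hc hbc N hN σ hσ p hlo hhi ρ hρdef hbranch
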